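/- arXiv:1307.3752 — 5 statements merged into one kernel-verified Lean document; each statement's English description precedes it below -/
import Mathlib

section
/- Let k be a field, F irreducible in k[X,Y], and suppose φ, ψ ∈ k(T) satisfy F(φ,ψ) = 0 and k(φ,ψ) = k(T), with φ, ψ ∉ k. Then the degree of the divisor of zeroes of φ in Div(k(T)/k) equals [k(T):k(φ)] which equals deg_Y F, and similarly deg div_0(ψ) = [k(T):k(ψ)] = deg_X F. -/
/-!
Since `ψ` is transcendental, `k(ψ)` is the fraction field of the polynomial ring `k[ψ] ≅ k[Y]`,
and `k(T) = k(ψ)(φ)`. Read in `k[Y][X]`, the irreducible `F` has positive degree in `X` because it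
vanishes at `φ`, so it is primitive and, by Gauss's lemma, stays irreducible over `k(ψ)`. Up to a
scalar it is then the minimal polynomial of `φ` over `k(ψ)`, whence `[k(T) : k(ψ)] = deg_X F`;
symmetrically `[k(T) : k(φ)] = deg_Y F`.
-/

open scoped IntermediateField

namespace MvPolynomial

section AdjoinImageCompl

variable {k K ι : Type*} [Field k] [Field K] [Algebra k K] {F : MvPolynomial ι k} {a : ι → K}

theorem natDegree_toPolynomialAdjoinImageCompl (i : ι) (H : AlgebraicIndepOn k a {i}ᶜ) :
    (toPolynomialAdjoinImageCompl F a i).natDegree = F.degreeOf i := by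
  have hinj : Function.Injective (aeval fun j : {j // j ≠ i} ↦
      (⟨a j, Algebra.subset_adjoin ⟨j, j.2, rfl⟩⟩ : Algebra.adjoin k (a '' {i}ᶜ))) :=
    .of_comp (f := Subalgebra.val _) (by rw [← AlgHom.coe_comp, comp_aeval]; exact H)
  unfold toPolynomialAdjoinImageCompl
  rw [Polynomial.coe_mapAlgHom, Polynomial.natDegree_map_eq_of_injective (by exact hinj),
    natDegree_optionEquivLeft, renameEquiv_apply]
  convert degreeOf_rename_of_injective (p := F) (Equiv.injective _) i
  simp

open scoped IntermediateField.algebraAdjoinAdjoin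

theorem aeval_map_toPolynomialAdjoinImageCompl (hFa : aeval a F = 0) (i : ι) :
    ((toPolynomialAdjoinImageCompl F a i).map
      (algebraMap _ (IntermediateField.adjoin k (a '' {i}ᶜ)))).aeval (a i) = 0 := by
  rw [Polynomial.aeval_map_algebraMap, aeval_toPolynomialAdjoinImageCompl_eq_zero hFa]

theorem irreducible_map_toPolynomialAdjoinImageCompl (hF : Irreducible F) (hFa : aeval a F = 0)
    (i : ι) (H : AlgebraicIndepOn k a {i}ᶜ) :
    Irreducible ((toPolynomialAdjoinImageCompl F a i).map
      (algebraMap _ (IntermediateField.adjoin k (a '' {i}ᶜ)))) := by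
  have := H.aevalEquiv.uniqueFactorizationMonoid inferInstance
  have hP := irreducible_toPolynomialAdjoinImageCompl hF i H
  have hdeg := Polynomial.natDegree_pos_of_aeval_root hP.ne_zero
    (aeval_toPolynomialAdjoinImageCompl_eq_zero hFa i) fun _ ↦ by simp
  exact (hP.isPrimitive hdeg.ne').irreducible_iff_irreducible_map_fraction_map.mp hP

theorem natDegree_minpoly_adjoin_image_compl (hF : Irreducible F) (hFa : aeval a F = 0) (i : ι)
    (H : AlgebraicIndepOn k a {i}ᶜ) :
    (minpoly (IntermediateField.adjoin k (a '' {i}ᶜ)) (a i)).natDegree = F.degreeOf i := by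
  have hG := irreducible_map_toPolynomialAdjoinImageCompl hF hFa i H
  rw [← minpoly.eq_of_irreducible hG (aeval_map_toPolynomialAdjoinImageCompl hFa i),
    Polynomial.natDegree_mul_C (inv_ne_zero (Polynomial.leadingCoeff_ne_zero.mpr hG.ne_zero)),
    Polynomial.natDegree_map_eq_of_injective (FaithfulSMul.algebraMap_injective _ _),
    natDegree_toPolynomialAdjoinImageCompl i H]

theorem finrank_adjoin_image_compl (hF : Irreducible F) (hFa : aeval a F = 0)
    (hgen : IntermediateField.adjoin k (Set.range a) = ⊤) (i : ι)
    (H : AlgebraicIndepOn k a {i}ᶜ) :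
    Module.finrank (IntermediateField.adjoin k (a '' {i}ᶜ)) K = F.degreeOf i := by
  set L := IntermediateField.adjoin k (a '' {i}ᶜ)
  have htop : L⟮a i⟯ = ⊤ := by
    apply IntermediateField.restrictScalars_injective k
    rw [IntermediateField.adjoin_adjoin_left, IntermediateField.restrictScalars_top, ← hgen,
      ← Set.image_singleton, ← Set.image_union, Set.compl_union_self, Set.image_univ]
  have hint : IsIntegral L (a i) :=
    IsAlgebraic.isIntegral ⟨_, (irreducible_map_toPolynomialAdjoinImageCompl hF hFa i H).ne_zero,
      aeval_map_toPolynomialAdjoinImageCompl hFa i⟩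
  rw [← natDegree_minpoly_adjoin_image_compl hF hFa i H, ← IntermediateField.adjoin.finrank hint,
    htop, IntermediateField.finrank_top']

end AdjoinImageCompl

theorem finrank_adjoin_rev_eq_degreeOf {k K : Type*} [Field k] [Field K] [Algebra k K]
    {F : MvPolynomial (Fin 2) k} (hF : Irreducible F) {a : Fin 2 → K} (hFa : aeval a F = 0)
    (hgen : IntermediateField.adjoin k (Set.range a) = ⊤) (i : Fin 2)
    (hi : Transcendental k (a i.rev)) :
    Module.finrank k⟮a i.rev⟯ K = F.degreeOf i := by
  have hcompl : ({i}ᶜ : Set (Fin 2)) = {i.rev} := by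
    ext j; fin_cases i <;> fin_cases j <;> simp
  have H : AlgebraicIndepOn k a {i}ᶜ :=
    hcompl ▸ (algebraicIndependent_singleton_iff (⟨i.rev, rfl⟩ : ({i.rev} : Set (Fin 2)))).mpr hi
  have h := finrank_adjoin_image_compl hF hFa hgen i H
  rwa [hcompl, Set.image_singleton] at h

end MvPolynomial

theorem RatFunc.transcendental_of_notMem_range_algebraMap {k : Type*} [Field k] {f : RatFunc k}
    (hf : f ∉ Set.range (algebraMap k (RatFunc k))) : Transcendental k f :=
  f.transcendental_of_ne_C fun ⟨c, hc⟩ ↦ hf ⟨c, by rw [RatFunc.algebraMap_eq_C, hc]⟩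

/-- **Theorem (Statement 6).** If `F ∈ k[X,Y]` is irreducible and `φ, ψ ∈ k(T)` satisfy
`F(φ,ψ) = 0`, `k(φ,ψ) = k(T)` and `φ, ψ ∉ k`, then the degree of the divisor of zeroes of
`φ` (which equals `max(deg u, deg w)` for `φ = u/w` in lowest terms) equals
`[k(T) : k(φ)] = deg_Y F`, and similarly `deg div₀(ψ) = [k(T) : k(ψ)] = deg_X F`. -/
theorem degree_divisor_of_zeroes_of_parametrization
    {k : Type*} [Field k] (F : MvPolynomial (Fin 2) k) (hF : Irreducible F)
    (φ ψ : RatFunc k)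
    (hroot : MvPolynomial.aeval ![φ, ψ] F = 0)
    (hgen : IntermediateField.adjoin k ({φ, ψ} : Set (RatFunc k)) = ⊤)
    (hφ : φ ∉ Set.range (algebraMap k (RatFunc k)))
    (hψ : ψ ∉ Set.range (algebraMap k (RatFunc k))) :
    (max φ.num.natDegree φ.denom.natDegree =
        Module.finrank (IntermediateField.adjoin k ({φ} : Set (RatFunc k))) (RatFunc k) ∧
      Module.finrank (IntermediateField.adjoin k ({φ} : Set (RatFunc k))) (RatFunc k) =
        F.degreeOf 1) ∧
    (max ψ.num.natDegree ψ.denom.natDegree =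
        Module.finrank (IntermediateField.adjoin k ({ψ} : Set (RatFunc k))) (RatFunc k) ∧
      Module.finrank (IntermediateField.adjoin k ({ψ} : Set (RatFunc k))) (RatFunc k) =
        F.degreeOf 0) := by
  rw [← Matrix.range_cons_cons_empty φ ψ ![]] at hgen
  exact ⟨⟨(RatFunc.finrank_eq_max_natDegree φ).symm,
      MvPolynomial.finrank_adjoin_rev_eq_degreeOf hF hroot hgen 1
        (RatFunc.transcendental_of_notMem_range_algebraMap hφ)⟩,
    (RatFunc.finrank_eq_max_natDegree ψ).symm,
      MvPolynomial.finrank_adjoin_rev_eq_degreeOf hF hroot hgen 0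
        (RatFunc.transcendental_of_notMem_range_algebraMap hψ)⟩
end

section
/- If K is a C1 field, then every algebraic extension of K is C1. In particular, if k is an algebraically closed field and τ is transcendental over k, then k(τ) is C1 (Tsen's theorem), and if char k = p > 0, then the perfect closure k(τ)^{p^{-∞}} is C1. -/
/-!
Lang: if `[L : K] = m`, expanding the `n` variables of a form `F` of degree `d` over `L` in a
`K`-basis and composing with the norm `N_{L/K}` gives a form of degree `d m` in `n m > d m`
variables over `K`; as the norm vanishes only at `0`, its nontrivial zero is one of `F`. An
algebraic extension is the union of its finite subextensions, and the perfect closure is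
algebraic.

Tsen: after clearing denominators, look for a zero of `F` in `k[t]ⁿ` of bounded degree. Its
coefficients are the unknowns, and the vanishing of `F` there is a system of fewer forms of positive
degree over `k` than unknowns, which has a nontrivial solution since `k` is algebraically closed.
-/

open MvPolynomial

/-- A field `K` is `C1` (quasi-algebraically closed) if every homogeneous polynomial of
degree `d` in `n > d > 0` variables over `K` has a nontrivial zero in `Kⁿ`. -/
def IsC1 (K : Type*) [Field K] : Prop :=
  ∀ (n d : ℕ), 0 < d → d < n →
    ∀ F : MvPolynomial (Fin n) K, F.IsHomogeneous d →
      ∃ a : Fin n → K, a ≠ 0 ∧ MvPolynomial.eval a F = 0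

namespace MvPolynomial

section KillVars

variable {R σ : Type*} [CommRing R]

open scoped Classical in
noncomputable def killVars (s : Set σ) : MvPolynomial σ R →ₐ[R] MvPolynomial σ R :=
  aeval fun i => if i ∈ s then 0 else X i

lemma killVars_X_of_mem {s : Set σ} {i : σ} (hi : i ∈ s) : killVars (R := R) s (X i) = 0 := by
  simp [killVars, hi]

lemma killVars_X_of_notMem {s : Set σ} {i : σ} (hi : i ∉ s) :
    killVars (R := R) s (X i) = X i := by
  simp [killVars, hi]

lemma killVars_comp_of_subset {s t : Set σ} (hst : s ⊆ t) :
    (killVars (R := R) t).comp (killVars s) = killVars t := by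
  refine algHom_ext fun i => ?_
  by_cases hi : i ∈ s
  · simp [killVars_X_of_mem, hi, hst hi]
  · simp [killVars_X_of_notMem, hi]

lemma ker_killVars_mono {s t : Set σ} (hst : s ⊆ t) :
    RingHom.ker (killVars (R := R) s) ≤ RingHom.ker (killVars (R := R) t) := by
  intro p hp
  rw [RingHom.mem_ker] at hp ⊢
  rw [← killVars_comp_of_subset hst, AlgHom.comp_apply, hp, map_zero]

lemma X_mem_ker_killVars_iff [Nontrivial R] {s : Set σ} {i : σ} :
    X i ∈ RingHom.ker (killVars (R := R) s) ↔ i ∈ s := by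
  by_cases hi : i ∈ s
  · simp [killVars_X_of_mem, hi]
  · simp [killVars_X_of_notMem, hi, X_ne_zero]

lemma mem_ker_killVars_univ {p : MvPolynomial σ R} :
    p ∈ RingHom.ker (killVars (R := R) (Set.univ : Set σ)) ↔ eval 0 p = 0 := by
  have : killVars (R := R) (Set.univ : Set σ) = (Algebra.ofId R _).comp (aeval 0) :=
    algHom_ext fun i => by simp [killVars_X_of_mem]
  simp [this, RingHom.mem_ker]

instance isPrime_ker_killVars [IsDomain R] (s : Set σ) :
    (RingHom.ker (killVars (R := R) s)).IsPrime :=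
  RingHom.ker_isPrime _

lemma card_le_height_ker_killVars [IsDomain R] (s : Finset σ) :
    (s.card : ℕ∞) ≤ (RingHom.ker (killVars (R := R) (s : Set σ))).height := by
  classical
  induction s using Finset.induction_on with
  | empty => simp
  | insert i s hi ih =>
    have hlt : RingHom.ker (killVars (R := R) (s : Set σ)) <
        RingHom.ker (killVars (R := R) (insert i s : Finset σ)) := by
      refine lt_of_le_of_ne (ker_killVars_mono (by simp)) fun h => hi ?_
      have hX : X i ∈ RingHom.ker (killVars (R := R) (insert i s : Finset σ)) :=
        X_mem_ker_killVars_iff.mpr (by simp)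
      rw [← h] at hX
      exact_mod_cast X_mem_ker_killVars_iff.mp hX
    rw [Finset.card_insert_of_notMem hi, Nat.cast_succ]
    exact (add_le_add_left ih 1).trans (Ideal.height_add_one_le_of_lt_of_isPrime hlt)

end KillVars

section AlgClosed

variable {k σ ι : Type*} [Field k] [IsAlgClosed k]

lemma ker_killVars_univ_mem_minimalPrimes [Finite σ] (G : ι → MvPolynomial σ k)
    (hG : ∀ j, eval 0 (G j) = 0) (hzero : ∀ x : σ → k, (∀ j, eval x (G j) = 0) → x = 0) :
    RingHom.ker (killVars (R := k) (Set.univ : Set σ)) ∈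
      (Ideal.span (Set.range G)).minimalPrimes := by
  refine ⟨⟨inferInstance, Ideal.span_le.mpr ?_⟩, fun q ⟨hq, hGq⟩ _ p hp => ?_⟩
  · rintro _ ⟨j, rfl⟩
    exact mem_ker_killVars_univ.mpr (hG j)
  · refine hq.radical_le_iff.mpr hGq ?_
    rw [← vanishingIdeal_zeroLocus_eq_radical (K := k), mem_vanishingIdeal_iff]
    intro x hx
    have hx0 : x = 0 := hzero x fun j => mem_zeroLocus_iff.mp hx _ (Ideal.subset_span ⟨j, rfl⟩)
    simpa [hx0] using mem_ker_killVars_univ.mp hp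

/-- By the Nullstellensatz, the origin would otherwise be an isolated point of the common zero
locus, i.e. the ideal of the origin, of height `card σ`, would be a minimal prime over an ideal
with `card ι` generators, contradicting Krull's height theorem. -/
theorem exists_ne_zero_forall_eval_eq_zero [Fintype σ] [Finite ι]
    (hcard : Nat.card ι < Fintype.card σ) (G : ι → MvPolynomial σ k)
    (hG : ∀ j, eval 0 (G j) = 0) : ∃ x : σ → k, x ≠ 0 ∧ ∀ j, eval x (G j) = 0 := by
  by_contra! hzero
  have hmin := ker_killVars_univ_mem_minimalPrimes G hG fun x hx => by
    by_contra hx0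
    obtain ⟨j, hj⟩ := hzero x hx0
    exact hj (hx j)
  have hupper := Ideal.height_le_card_of_mem_minimalPrimes_span (Set.finite_range G) hmin
  have hlower := card_le_height_ker_killVars (R := k) (Finset.univ : Finset σ)
  rw [Finset.coe_univ, Finset.card_univ] at hlower
  have hrange : (Set.range G).ncard ≤ Nat.card ι := by
    simpa [Set.image_univ, Set.ncard_univ] using Set.ncard_image_le (f := G) Set.finite_univ
  have := hlower.trans hupper
  norm_cast at this
  omega

end AlgClosed

lemma IsHomogeneous.eval_zero_eq_zero {R σ : Type*} [CommSemiring R] {F : MvPolynomial σ R}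
    {d : ℕ} (hF : F.IsHomogeneous d) (hd : 0 < d) : eval 0 F = 0 := by
  rw [eval_zero, constantCoeff_eq]
  exact hF.coeff_eq_zero (by simp; omega)

section MapCoeffs

variable {k A σ : Type*} [CommRing k] [CommRing A] [Algebra k A]

noncomputable def mapCoeffs (ℓ : A →ₗ[k] k) (P : MvPolynomial σ A) : MvPolynomial σ k :=
  ∑ μ ∈ P.support, monomial μ (ℓ (coeff μ P))

@[simp]
lemma coeff_mapCoeffs (ℓ : A →ₗ[k] k) (P : MvPolynomial σ A) (μ : σ →₀ ℕ) :
    coeff μ (mapCoeffs ℓ P) = ℓ (coeff μ P) := by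
  classical
  simp only [mapCoeffs, coeff_sum, coeff_monomial, Finset.sum_ite_eq', mem_support_iff]
  split_ifs with h
  · rfl
  · rw [not_not.mp h, map_zero]

lemma IsHomogeneous.mapCoeffs (ℓ : A →ₗ[k] k) {P : MvPolynomial σ A} {d : ℕ}
    (hP : P.IsHomogeneous d) : (P.mapCoeffs ℓ).IsHomogeneous d := fun μ hμ =>
  hP fun h => hμ (by rw [coeff_mapCoeffs, h, map_zero])

lemma eval_mapCoeffs (ℓ : A →ₗ[k] k) (P : MvPolynomial σ A) (y : σ → k) :
    eval y (mapCoeffs ℓ P) = ℓ (eval (algebraMap k A ∘ y) P) := by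
  rw [mapCoeffs, map_sum, eval_eq, map_sum]
  refine Finset.sum_congr rfl fun μ _ => ?_
  simp only [eval_monomial, Function.comp_apply, ← map_pow, ← map_prod, Finsupp.prod]
  rw [mul_comm (coeff μ P), ← Algebra.smul_def, map_smul, smul_eq_mul, mul_comm]

theorem exists_isHomogeneous_eval_eq_linearMap {ι : Type*} [Fintype ι] (ℓ : A →ₗ[k] k)
    (e : ι → A) {F : MvPolynomial σ A} {d : ℕ} (hF : F.IsHomogeneous d) :
    ∃ Q : MvPolynomial (σ × ι) k, Q.IsHomogeneous d ∧
      ∀ y, eval y Q = ℓ (eval (fun i => ∑ j, y (i, j) • e j) F) := by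
  set g : σ → MvPolynomial (σ × ι) A := fun i => ∑ j, C (e j) * X (i, j)
  have hg : ∀ i, (g i).IsHomogeneous 1 := fun i =>
    IsHomogeneous.sum _ _ _ fun j _ => isHomogeneous_C_mul_X _ _
  refine ⟨mapCoeffs ℓ (bind₁ g F), ?_, fun y => ?_⟩
  · simpa using (hF.aeval g hg).mapCoeffs ℓ
  · rw [eval_mapCoeffs]
    congr 1
    change eval₂Hom (RingHom.id A) _ (bind₁ g F) = eval₂Hom (RingHom.id A) _ F
    rw [eval₂Hom_bind₁]
    congr 2
    funext i
    simp [g, Algebra.smul_def, mul_comm]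

end MapCoeffs

lemma exists_ne_zero_eval_map_eq_zero {R S σ : Type*} [CommRing R] [CommRing S] {f : R →+* S}
    (hf : Function.Injective f) {F : MvPolynomial σ R} {a : σ → R} (ha0 : a ≠ 0)
    (ha : eval a F = 0) : ∃ b : σ → S, b ≠ 0 ∧ eval b (map f F) = 0 := by
  refine ⟨f ∘ a, fun h => ha0 ?_, ?_⟩
  · exact _root_.funext fun i => hf (by simpa using congrFun h i)
  · rw [← map_eval, ha, map_zero]

lemma exists_C_mul_mem_range_map {A K σ : Type*} [CommRing A] [Field K] [Algebra A K]
    [IsFractionRing A K] (F : MvPolynomial σ K) :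
    ∃ c : K, c ≠ 0 ∧ C c * F ∈ Set.range (map (algebraMap A K)) := by
  obtain ⟨b, hb⟩ := IsLocalization.exist_integer_multiples_of_finset (nonZeroDivisors A) F.coeffs
  refine ⟨algebraMap A K b, (IsLocalization.map_units K b).ne_zero,
    mem_range_map_iff_coeffs_subset.mpr fun x hx => ?_⟩
  obtain ⟨μ, hμ, rfl⟩ := mem_coeffs_iff.mp hx
  obtain ⟨y, hy⟩ := hb _ (coeff_mem_coeffs μ fun h => by simp [coeff_C_mul, h] at hμ)
  exact ⟨y, by rw [hy, coeff_C_mul, ← Algebra.smul_def]⟩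

end MvPolynomial

lemma sum_smul_ne_zero_of_linearIndependent {k A σ ι : Type*} [CommRing k] [AddCommGroup A]
    [Module k A] [Fintype ι] {e : ι → A} (he : LinearIndependent k e) {y : σ × ι → k}
    (hy : y ≠ 0) : (fun i => ∑ j, y (i, j) • e j) ≠ 0 := fun h =>
  hy (_root_.funext fun ⟨i, j⟩ => Fintype.linearIndependent_iff.mp he _ (congrFun h i) j)

section NormForm

variable {K L ι : Type*} [Field K] [Field L] [Algebra K L] [FiniteDimensional K L]
  [Fintype ι] [DecidableEq ι]

/-- The norm form `x ↦ N_{L/K}(∑ᵢ xᵢ bᵢ)`, up to the sign `(-1) ^ [L : K]`. -/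
noncomputable def normForm (b : Module.Basis ι K L) : MvPolynomial ι K :=
  ((Algebra.lmul K L).toLinearMap.polyCharpoly b).coeff 0

lemma isHomogeneous_normForm (b : Module.Basis ι K L) :
    (normForm b).IsHomogeneous (Module.finrank K L) :=
  LinearMap.polyCharpoly_coeff_isHomogeneous _ b 0 _ (zero_add _)

lemma eval_repr_normForm_eq_zero_iff (b : Module.Basis ι K L) (x : L) :
    eval (b.repr x) (normForm b) = 0 ↔ x = 0 := by
  rw [normForm, LinearMap.polyCharpoly_coeff_eval, ← Algebra.norm_eq_zero_iff (R := K) (x := x),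
    Algebra.norm_apply, LinearMap.det_eq_sign_charpoly_coeff]
  simp

end NormForm

theorem IsC1.exists_root {K σ : Type*} [Field K] [Fintype σ] (hK : IsC1 K) {d : ℕ} (hd : 0 < d)
    (hdσ : d < Fintype.card σ) {F : MvPolynomial σ K} (hF : F.IsHomogeneous d) :
    ∃ a : σ → K, a ≠ 0 ∧ eval a F = 0 := by
  let e := Fintype.equivFin σ
  obtain ⟨a, ha0, haF⟩ := hK _ d hd hdσ (rename e F) hF.rename_isHomogeneous
  refine ⟨a ∘ e, fun h => ha0 (_root_.funext fun x => by simpa using congrFun h (e.symm x)), ?_⟩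
  rwa [eval_rename] at haF

theorem IsC1.of_finiteDimensional {K : Type*} [Field K] (hK : IsC1 K) (L : Type*) [Field L]
    [Algebra K L] [FiniteDimensional K L] : IsC1 L := by
  intro n d hd hdn F hF
  let b := Module.finBasis K L
  have hm : 0 < Module.finrank K L := Module.finrank_pos
  choose Q hQ hQeval using fun t => exists_isHomogeneous_eval_eq_linearMap (b.coord t) b hF
  have hcard : d * Module.finrank K L < Fintype.card (Fin n × Fin (Module.finrank K L)) := by
    simpa using Nat.mul_lt_mul_of_pos_right hdn hm
  obtain ⟨y, hy0, hy⟩ := hK.exists_root (Nat.mul_pos hd hm) hcard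
    ((isHomogeneous_normForm b).aeval Q hQ)
  refine ⟨_, sum_smul_ne_zero_of_linearIndependent b.linearIndependent hy0, ?_⟩
  rw [← eval_repr_normForm_eq_zero_iff b, ← hy]
  change _ = eval₂Hom (RingHom.id K) y (bind₁ Q (normForm b))
  rw [eval₂Hom_bind₁]
  congr 2
  funext t
  exact (hQeval t y).symm

theorem IsC1.of_isAlgebraic {K : Type*} [Field K] (hK : IsC1 K) (L : Type*) [Field L]
    [Algebra K L] [Algebra.IsAlgebraic K L] : IsC1 L := by
  intro n d hd hdn F hF
  let L₀ := IntermediateField.adjoin K (F.coeffs : Set L)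
  have : FiniteDimensional K L₀ := IntermediateField.finiteDimensional_adjoin fun x _ =>
    (Algebra.IsAlgebraic.isAlgebraic x).isIntegral
  obtain ⟨F₀, hF₀⟩ : F ∈ Set.range (map (algebraMap L₀ L)) :=
    mem_range_map_iff_coeffs_subset.mpr fun x hx =>
      ⟨⟨x, IntermediateField.subset_adjoin _ _ hx⟩, rfl⟩
  have hinj := (algebraMap L₀ L).injective
  have hF₀d : (map (algebraMap L₀ L) F₀).IsHomogeneous d := hF₀ ▸ hF
  obtain ⟨a, ha0, ha⟩ := hK.of_finiteDimensional L₀ n d hd hdn F₀ (hF₀d.of_map hinj)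
  exact hF₀ ▸ exists_ne_zero_eval_map_eq_zero hinj ha0 ha

theorem IsC1.perfectClosure {K : Type*} [Field K] (hK : IsC1 K) (p : ℕ) [Fact p.Prime]
    [CharP K p] : IsC1 (PerfectClosure K p) := by
  let _ : Algebra K (PerfectClosure K p) := (PerfectClosure.of K p).toAlgebra
  have : IsPRadical (algebraMap K (PerfectClosure K p)) p := PerfectClosure.isPRadical K p
  have := (IsPRadical.isPurelyInseparable K (PerfectClosure K p) p).isAlgebraic
  exact hK.of_isAlgebraic _

open Polynomial in
theorem MvPolynomial.natDegree_eval_le {R σ : Type*} [CommSemiring R] {F : MvPolynomial σ R[X]}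
    {d r s : ℕ} (hF : F.IsHomogeneous d) (hr : ∀ μ, (coeff μ F).natDegree ≤ r) {a : σ → R[X]}
    (ha : ∀ i, (a i).natDegree ≤ s) : (eval a F).natDegree ≤ r + d * s := by
  rw [eval_eq]
  refine natDegree_sum_le_of_forall_le _ _ fun μ hμ =>
    natDegree_mul_le.trans (add_le_add (hr μ) ?_)
  have hμd : Finsupp.degree μ = d := by
    rw [Finsupp.degree_eq_weight_one]; exact hF (mem_support_iff.mp hμ)
  calc _ ≤ ∑ i ∈ μ.support, (a i ^ μ i).natDegree := natDegree_prod_le _ _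
    _ ≤ ∑ i ∈ μ.support, μ i * s := Finset.sum_le_sum fun i _ => natDegree_pow_le_of_le _ (ha i)
    _ = d * s := by rw [← Finset.sum_mul, ← hμd, Finsupp.degree]; rfl

/-- Look for a zero whose coordinates have degree `≤ r`, where `r` bounds the degrees of the
coefficients of `F`. The value of `F` then has degree `≤ r + d r`, so it vanishes as soon as
`r + d r + 1` forms of degree `d` over `k` in the `n (r + 1)` coefficients of the coordinates
vanish, and `r + d r + 1 < (d + 1) (r + 1) ≤ n (r + 1)`. -/
theorem exists_ne_zero_eval_eq_zero_over_polynomial {k σ : Type*} [Field k] [IsAlgClosed k]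
    [Fintype σ] {F : MvPolynomial σ (Polynomial k)} {d : ℕ} (hF : F.IsHomogeneous d) (hd : 0 < d)
    (hdσ : d < Fintype.card σ) : ∃ a : σ → Polynomial k, a ≠ 0 ∧ eval a F = 0 := by
  obtain ⟨r, hr⟩ : ∃ r, ∀ μ, (coeff μ F).natDegree ≤ r := by
    refine ⟨F.coeffs.sup Polynomial.natDegree, fun μ => ?_⟩
    by_cases hμ : coeff μ F = 0
    · simp [hμ]
    · exact Finset.le_sup (coeff_mem_coeffs μ hμ)
  let e : Fin (r + 1) → Polynomial k := fun j => Polynomial.X ^ (j : ℕ)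
  have he : LinearIndependent k e := by
    simpa [e, Function.comp_def, Polynomial.X_pow_eq_monomial] using
      (Polynomial.basisMonomials k).linearIndependent.comp _ Fin.val_injective
  choose Q hQ hQeval using fun c : Fin (r + d * r + 1) =>
    exists_isHomogeneous_eval_eq_linearMap (Polynomial.lcoeff k c) e hF
  have hcard : Nat.card (Fin (r + d * r + 1)) < Fintype.card (σ × Fin (r + 1)) := by
    simp only [Nat.card_eq_fintype_card, Fintype.card_fin, Fintype.card_prod]
    nlinarith
  obtain ⟨y, hy0, hy⟩ :=
    exists_ne_zero_forall_eval_eq_zero hcard Q fun c => (hQ c).eval_zero_eq_zero hd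
  refine ⟨_, sum_smul_ne_zero_of_linearIndependent he hy0, ?_⟩
  have hdeg := natDegree_eval_le hF hr (s := r) (a := fun i => ∑ j, y (i, j) • e j) fun i =>
    Polynomial.natDegree_sum_le_of_forall_le _ _ fun j _ =>
      (Polynomial.natDegree_smul_le _ _).trans (by simp [e]; omega)
  ext c
  rw [Polynomial.coeff_zero]
  by_cases hc : c ≤ r + d * r
  · simpa [hQeval] using hy ⟨c, by omega⟩
  · exact Polynomial.coeff_eq_zero_of_natDegree_lt (by omega)

theorem isC1_ratFunc (k : Type*) [Field k] [IsAlgClosed k] : IsC1 (RatFunc k) := by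
  intro n d hd hdn F hF
  obtain ⟨c, hc, F₀, hF₀⟩ := exists_C_mul_mem_range_map (A := Polynomial k) F
  have hinj := IsFractionRing.injective (Polynomial k) (RatFunc k)
  have hF₀d : (map (algebraMap (Polynomial k) (RatFunc k)) F₀).IsHomogeneous d := hF₀ ▸ hF.C_mul c
  obtain ⟨a₀, ha₀, ha₀F⟩ :=
    exists_ne_zero_eval_eq_zero_over_polynomial (hF₀d.of_map hinj) hd (by simpa using hdn)
  obtain ⟨a, ha, haF⟩ := exists_ne_zero_eval_map_eq_zero hinj ha₀ ha₀F
  rw [hF₀, map_mul, MvPolynomial.eval_C] at haF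
  exact ⟨a, ha, (mul_eq_zero.mp haF).resolve_left hc⟩

/-- **Theorem (Statement 10, Lang & Tsen).** Every algebraic extension of a `C1` field is
`C1`; for `k` algebraically closed, `k(τ)` is `C1` (Tsen), and in characteristic `p > 0`
the perfect closure `k(τ)^{p^{-∞}}` is `C1`. -/
theorem c1_algebraic_extension_and_tsen :
    (∀ (K : Type) [Field K], IsC1 K →
        ∀ (L : Type) [Field L] [Algebra K L], Algebra.IsAlgebraic K L → IsC1 L) ∧
      (∀ (k : Type) [Field k] [IsAlgClosed k], IsC1 (RatFunc k)) ∧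
      (∀ (k : Type) [Field k] [IsAlgClosed k] (p : ℕ) [Fact p.Prime] [CharP k p]
          [CharP (RatFunc k) p], IsC1 (PerfectClosure (RatFunc k) p)) :=
  ⟨fun _ _ hK L _ _ _ => hK.of_isAlgebraic L, fun k _ _ => isC1_ratFunc k,
    fun k _ _ p _ _ _ => (isC1_ratFunc k).perfectClosure p⟩
end

section
/- Let E be a field and F = E(v) a purely transcendental extension of transcendence degree 1. Then F/E has property (*): for any two distinct valuation rings O1 ≠ O2 of F over E (both ≠ F), there exists ξ ∈ F \ E with supp(div ξ) = {O1, O2}. -/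
noncomputable section

/-- A place of a field `L` over a subfield `E`: a valuation ring of `L` containing `E`
and different from `L`. -/
def IsPlaceOver {L : Type*} [Field L] (E : Subfield L) (O : ValuationSubring L) : Prop :=
  (E : Set L) ⊆ O ∧ O ≠ ⊤

/-- The support of the principal divisor of `ξ`: the set of places at which `ξ`
is not a unit of the valuation ring. -/
def divSupp {L : Type*} [Field L] (E : Subfield L) (ξ : L) : Set (ValuationSubring L) :=
  {O | IsPlaceOver E O ∧ (ξ ∉ O ∨ ξ⁻¹ ∉ O)}

namespace PropertyStarAux

open Polynomial

variable {E : Type*} [Field E]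

/-- cross multiplication contradiction lemma -/
theorem cross {p : E[X]} (hp : Prime p) {f g f' g' : E[X]}
    (hcop : IsCoprime f g) (hg : g ≠ 0) (hg' : ¬ p ∣ g')
    (heq : algebraMap E[X] (RatFunc E) f / algebraMap E[X] (RatFunc E) g
         = algebraMap E[X] (RatFunc E) f' / algebraMap E[X] (RatFunc E) g')
    (hdvd : p ∣ g) : False := by
  have hg'0 : g' ≠ 0 := by rintro rfl; exact hg' (dvd_zero p)
  have h2 : f * g' = f' * g := by
    apply RatFunc.algebraMap_injective E
    rw [map_mul, map_mul]
    exact (div_eq_div_iff (RatFunc.algebraMap_ne_zero hg)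
      (RatFunc.algebraMap_ne_zero hg'0)).mp heq
  have h3 : p ∣ f * g' := h2 ▸ (hdvd.mul_left f')
  rcases hp.dvd_mul.mp h3 with h | h
  · exact hp.not_unit (hcop.isUnit_of_dvd' h hdvd)
  · exact hg' h

/-- The place associated to an irreducible polynomial `p`:
the localization of `E[X]` at `(p)`, as a valuation subring of `RatFunc E`. -/
def locO (p : E[X]) (hp : Prime p) : ValuationSubring (RatFunc E) where
  carrier := {x | ∃ f g : E[X], ¬ p ∣ g ∧
    x = algebraMap E[X] (RatFunc E) f / algebraMap E[X] (RatFunc E) g}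
  zero_mem' := ⟨0, 1, hp.not_dvd_one, by simp⟩
  one_mem' := ⟨1, 1, hp.not_dvd_one, by simp⟩
  neg_mem' := by
    rintro x ⟨f, g, hg, rfl⟩
    exact ⟨-f, g, hg, by rw [map_neg, neg_div]⟩
  mul_mem' := by
    rintro x y ⟨f₁, g₁, hg₁, rfl⟩ ⟨f₂, g₂, hg₂, rfl⟩
    exact ⟨f₁ * f₂, g₁ * g₂, fun h => (hp.dvd_mul.mp h).elim hg₁ hg₂,
      by rw [map_mul, map_mul, div_mul_div_comm]⟩
  add_mem' := by
    rintro x y ⟨f₁, g₁, hg₁, rfl⟩ ⟨f₂, g₂, hg₂, rfl⟩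
    have h₁ : algebraMap E[X] (RatFunc E) g₁ ≠ 0 :=
      RatFunc.algebraMap_ne_zero (fun h => hg₁ (h ▸ dvd_zero p))
    have h₂ : algebraMap E[X] (RatFunc E) g₂ ≠ 0 :=
      RatFunc.algebraMap_ne_zero (fun h => hg₂ (h ▸ dvd_zero p))
    refine ⟨f₁ * g₂ + g₁ * f₂, g₁ * g₂, fun h => (hp.dvd_mul.mp h).elim hg₁ hg₂, ?_⟩
    rw [div_add_div _ _ h₁ h₂, map_add, map_mul, map_mul, map_mul]
  mem_or_inv_mem' := by
    intro x
    by_cases hx : x = 0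
    · exact Or.inl ⟨0, 1, hp.not_dvd_one, by simp [hx]⟩
    by_cases hd : p ∣ x.denom
    · right
      refine ⟨x.denom, x.num, fun hn =>
        hp.not_unit ((RatFunc.isCoprime_num_denom x).isUnit_of_dvd' hn hd), ?_⟩
      conv_lhs => rw [← RatFunc.num_div_denom x]
      rw [inv_div]
    · exact Or.inl ⟨x.num, x.denom, hd, (RatFunc.num_div_denom x).symm⟩

theorem mem_locO {p : E[X]} (hp : Prime p) {x : RatFunc E} :
    x ∈ locO p hp ↔ ∃ f g : E[X], ¬ p ∣ g ∧
      x = algebraMap E[X] (RatFunc E) f / algebraMap E[X] (RatFunc E) g := Iff.rfl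

theorem mem_locO_iff {p : E[X]} (hp : Prime p) {f g : E[X]}
    (hcop : IsCoprime f g) (hg : g ≠ 0) {x : RatFunc E}
    (hx : x = algebraMap E[X] (RatFunc E) f / algebraMap E[X] (RatFunc E) g) :
    x ∈ locO p hp ↔ ¬ p ∣ g := by
  constructor
  · rintro ⟨f', g', hg', hx'⟩ hdvd
    exact cross hp hcop hg hg' (hx ▸ hx') hdvd
  · intro h
    exact ⟨f, g, h, hx⟩

theorem inv_mem_locO_iff {p : E[X]} (hp : Prime p) {f g : E[X]}
    (hcop : IsCoprime f g) (hf : f ≠ 0) {x : RatFunc E}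
    (hx : x = algebraMap E[X] (RatFunc E) f / algebraMap E[X] (RatFunc E) g) :
    x⁻¹ ∈ locO p hp ↔ ¬ p ∣ f :=
  mem_locO_iff hp hcop.symm hf (by rw [hx, inv_div])

theorem intDeg_inv {x : RatFunc E} (hx : x ≠ 0) : x⁻¹.intDegree = -x.intDegree := by
  have h := RatFunc.intDegree_mul hx (inv_ne_zero hx)
  rw [mul_inv_cancel₀ hx, RatFunc.intDegree_one] at h
  linarith

/-- The place at infinity. -/
def infO : ValuationSubring (RatFunc E) where
  carrier := {x : RatFunc E | x.intDegree ≤ 0}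
  zero_mem' := by simp [RatFunc.intDegree_zero]
  one_mem' := by simp [RatFunc.intDegree_one]
  neg_mem' := by intro x hx; simpa [RatFunc.intDegree_neg] using hx
  mul_mem' := by
    intro x y hx hy
    by_cases h0 : x = 0; · simp [h0, RatFunc.intDegree_zero]
    by_cases h1 : y = 0; · simp [h1, RatFunc.intDegree_zero]
    have := RatFunc.intDegree_mul h0 h1
    simp only [Set.mem_setOf_eq] at *
    rw [this]; linarith
  add_mem' := by
    intro x y hx hy
    simp only [Set.mem_setOf_eq] at *
    by_cases hxy : x + y = 0; · simp [hxy, RatFunc.intDegree_zero]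
    by_cases h1 : y = 0; · simpa [h1] using hx
    calc (x + y).intDegree ≤ max x.intDegree y.intDegree :=
          RatFunc.intDegree_add_le h1 hxy
      _ ≤ 0 := max_le hx hy
  mem_or_inv_mem' := by
    intro x
    by_cases hx : x = 0; · left; simp [hx, RatFunc.intDegree_zero]
    rcases le_or_gt x.intDegree 0 with h | h
    · exact Or.inl h
    · right
      show x⁻¹.intDegree ≤ 0
      rw [intDeg_inv hx]
      linarith

theorem mem_infO {x : RatFunc E} : x ∈ (infO : ValuationSubring (RatFunc E)) ↔
    x.intDegree ≤ 0 := Iff.rfl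

theorem val_inv_lt_one {O : ValuationSubring (RatFunc E)} {x : RatFunc E} (hx : x ∉ O) :
    O.valuation x⁻¹ < 1 := by
  have hx0 : x ≠ 0 := fun h => hx (h ▸ O.zero_mem)
  have h1 : ¬ O.valuation x ≤ 1 := fun h => hx (O.mem_of_valuation_le_one x h)
  rw [map_inv₀]
  by_contra hc
  rw [not_lt] at hc
  have hne : O.valuation x ≠ 0 := (Valuation.ne_zero_iff _).2 hx0
  have h2 : O.valuation x * 1 ≤ O.valuation x * (O.valuation x)⁻¹ := mul_le_mul_right hc _
  rw [mul_one, mul_inv_cancel₀ hne] at h2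
  exact h1 h2

theorem val_eq_one {O : ValuationSubring (RatFunc E)} {x : RatFunc E} (hx0 : x ≠ 0)
    (h1 : x ∈ O) (h2 : x⁻¹ ∈ O) : O.valuation x = 1 := by
  have a := (O.valuation_le_one_iff x).2 h1
  have b := (O.valuation_le_one_iff x⁻¹).2 h2
  rw [map_inv₀] at b
  have hne : O.valuation x ≠ 0 := (Valuation.ne_zero_iff _).2 hx0
  refine le_antisymm a ?_
  calc (1 : O.ValueGroup) = O.valuation x * (O.valuation x)⁻¹ := (mul_inv_cancel₀ hne).symm
    _ ≤ O.valuation x * 1 := mul_le_mul_right b _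
    _ = O.valuation x := mul_one _

theorem C_mem {O : ValuationSubring (RatFunc E)}
    (hE : ((algebraMap E (RatFunc E)).fieldRange : Set (RatFunc E)) ⊆ O) (c : E) :
    RatFunc.C c ∈ O :=
  hE ⟨c, by rw [RatFunc.algebraMap_eq_C]⟩

theorem C_ne_zero' {c : E} (hc : c ≠ 0) : (RatFunc.C c : RatFunc E) ≠ 0 := by
  have h : algebraMap E[X] (RatFunc E) (Polynomial.C c) ≠ 0 :=
    RatFunc.algebraMap_ne_zero (by simpa using hc)
  rwa [RatFunc.algebraMap_C] at h

theorem val_C_eq_one {O : ValuationSubring (RatFunc E)}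
    (hE : ((algebraMap E (RatFunc E)).fieldRange : Set (RatFunc E)) ⊆ O) {c : E} (hc : c ≠ 0) :
    O.valuation (RatFunc.C c) = 1 := by
  refine val_eq_one (C_ne_zero' hc) (C_mem hE c) ?_
  rw [← map_inv₀ (RatFunc.C : E →+* RatFunc E)]
  exact C_mem hE c⁻¹

theorem num_eq_mul_denom (x : RatFunc E) :
    algebraMap E[X] (RatFunc E) x.num = x * algebraMap E[X] (RatFunc E) x.denom :=
  (div_eq_iff (RatFunc.algebraMap_ne_zero (RatFunc.denom_ne_zero x))).mp
    (RatFunc.num_div_denom x)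

/-- The prime ideal of `E[X]` attached to a place containing all polynomials. -/
def placeIdeal (O : ValuationSubring (RatFunc E))
    (hO : ∀ f : E[X], algebraMap E[X] (RatFunc E) f ∈ O) : Ideal E[X] where
  carrier := {f | O.valuation (algebraMap E[X] (RatFunc E) f) < 1}
  zero_mem' := by
    simp only [Set.mem_setOf_eq, map_zero]
    exact zero_lt_one
  add_mem' := fun ha hb => by
    simp only [Set.mem_setOf_eq, map_add] at *
    exact Valuation.map_add_lt _ ha hb
  smul_mem' := fun c f hf => by
    simp only [Set.mem_setOf_eq, smul_eq_mul, map_mul] at *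
    calc O.valuation (algebraMap E[X] (RatFunc E) c) * O.valuation (algebraMap E[X] (RatFunc E) f)
        ≤ 1 * O.valuation (algebraMap E[X] (RatFunc E) f) :=
          mul_le_mul_left ((O.valuation_le_one_iff _).2 (hO c)) _
      _ = O.valuation (algebraMap E[X] (RatFunc E) f) := one_mul _
      _ < 1 := hf

theorem mem_placeIdeal {O : ValuationSubring (RatFunc E)}
    {hO : ∀ f : E[X], algebraMap E[X] (RatFunc E) f ∈ O} {f : E[X]} :
    f ∈ placeIdeal O hO ↔ O.valuation (algebraMap E[X] (RatFunc E) f) < 1 := Iff.rfl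

theorem isPlace_locO (p : E[X]) (hp : Prime p) :
    IsPlaceOver (algebraMap E (RatFunc E)).fieldRange (locO p hp) := by
  constructor
  · rintro x ⟨c, rfl⟩
    refine ⟨Polynomial.C c, 1, hp.not_dvd_one, ?_⟩
    rw [RatFunc.algebraMap_C, map_one, div_one, RatFunc.algebraMap_eq_C]
  · intro htop
    have hmem : (algebraMap E[X] (RatFunc E) p)⁻¹ ∈ locO p hp := by
      rw [htop]; trivial
    rw [inv_mem_locO_iff hp (isCoprime_one_right) hp.ne_zero
      (by rw [map_one, div_one])] at hmem
    exact hmem dvd_rfl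

theorem isPlace_infO :
    IsPlaceOver (algebraMap E (RatFunc E)).fieldRange (infO (E := E)) := by
  constructor
  · rintro x ⟨c, rfl⟩
    show (algebraMap E (RatFunc E) c).intDegree ≤ 0
    rw [RatFunc.algebraMap_eq_C, RatFunc.intDegree_C]
  · intro htop
    have hmem : (RatFunc.X : RatFunc E) ∈ infO (E := E) := by rw [htop]; trivial
    have h := mem_infO.mp hmem
    rw [RatFunc.intDegree_X] at h
    norm_num at h

theorem classify (O : ValuationSubring (RatFunc E))
    (h : IsPlaceOver (algebraMap E (RatFunc E)).fieldRange O) :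
    (∃ (p : E[X]) (hp : Prime p), O = locO p hp) ∨ O = infO := by
  obtain ⟨hE, htop⟩ := h
  by_cases hX : (RatFunc.X : RatFunc E) ∈ O
  · -- finite place
    left
    have hpoly : ∀ f : E[X], algebraMap E[X] (RatFunc E) f ∈ O := by
      intro f
      induction f using Polynomial.induction_on' with
      | add p q hp hq => rw [map_add]; exact O.add_mem _ _ hp hq
      | monomial n a =>
        rw [← Polynomial.C_mul_X_pow_eq_monomial, map_mul, map_pow,
          RatFunc.algebraMap_C, RatFunc.algebraMap_X]
        exact O.mul_mem _ _ (C_mem hE a) (pow_mem hX n)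
    set P := placeIdeal O hpoly with hPdef
    have hP1 : (1 : E[X]) ∉ P := by
      intro h1
      rw [mem_placeIdeal, map_one, map_one] at h1
      exact lt_irrefl _ h1
    haveI hprime : P.IsPrime := by
      constructor
      · intro htop'; exact hP1 (htop' ▸ Submodule.mem_top)
      · intro f g hfg
        rw [mem_placeIdeal, map_mul, map_mul] at hfg
        by_contra hboth
        push_neg at hboth
        obtain ⟨hf, hg⟩ := hboth
        have hf' : ¬ O.valuation (algebraMap E[X] (RatFunc E) f) < 1 := hf
        have hg' : ¬ O.valuation (algebraMap E[X] (RatFunc E) g) < 1 := hg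
        rw [not_lt] at hf' hg'
        exact absurd hfg (not_lt.2 (one_le_mul hf' hg'))
    haveI : P.IsPrincipal := IsPrincipalIdealRing.principal P
    have hPbot : P ≠ ⊥ := by
      obtain ⟨x, hx⟩ : ∃ x : RatFunc E, x ∉ O := by
        by_contra hall
        push_neg at hall
        exact htop (by ext y; exact iff_of_true (hall y) trivial)
      have hx0 : x ≠ 0 := fun h => hx (h ▸ O.zero_mem)
      have hxinv : O.valuation x⁻¹ < 1 := val_inv_lt_one hx
      intro hbot
      have hinv0 : x⁻¹ ≠ 0 := inv_ne_zero hx0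
      have hnum : (x⁻¹).num ∈ P := by
        rw [mem_placeIdeal]
        have heq : algebraMap E[X] (RatFunc E) (x⁻¹).num
            = x⁻¹ * algebraMap E[X] (RatFunc E) (x⁻¹).denom := num_eq_mul_denom x⁻¹
        rw [heq, map_mul]
        calc O.valuation x⁻¹ * O.valuation (algebraMap E[X] (RatFunc E) (x⁻¹).denom)
            ≤ O.valuation x⁻¹ * 1 :=
              mul_le_mul_right ((O.valuation_le_one_iff _).2 (hpoly _)) _
          _ = O.valuation x⁻¹ := mul_one _
          _ < 1 := hxinv
      rw [hbot, Submodule.mem_bot] at hnum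
      exact RatFunc.num_ne_zero hinv0 hnum
    have hp : Prime (Submodule.IsPrincipal.generator P) :=
      Submodule.IsPrincipal.prime_generator_of_isPrime P hPbot
    set p := Submodule.IsPrincipal.generator P with hpdef
    have hmemP : ∀ f : E[X], f ∈ P ↔ p ∣ f := fun f =>
      Submodule.IsPrincipal.mem_iff_generator_dvd P
    refine ⟨p, hp, ?_⟩
    ext x
    constructor
    · intro hxO
      by_cases hx0 : x = 0
      · rw [hx0]; exact (locO p hp).zero_mem
      rw [mem_locO_iff hp (RatFunc.isCoprime_num_denom x) (RatFunc.denom_ne_zero x)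
        (RatFunc.num_div_denom x).symm]
      intro hdvd
      have hdP : x.denom ∈ P := (hmemP _).2 hdvd
      have hnP : x.num ∉ P := by
        rw [hmemP]
        intro hn
        exact hp.not_unit ((RatFunc.isCoprime_num_denom x).isUnit_of_dvd' hn hdvd)
      have hnP' : ¬ O.valuation (algebraMap E[X] (RatFunc E) x.num) < 1 := hnP
      have hnum1 : O.valuation (algebraMap E[X] (RatFunc E) x.num) = 1 :=
        le_antisymm ((O.valuation_le_one_iff _).2 (hpoly _)) (not_lt.1 hnP')
      have hxden : x * algebraMap E[X] (RatFunc E) x.denom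
          = algebraMap E[X] (RatFunc E) x.num := (num_eq_mul_denom x).symm
      have hvx : O.valuation x ≤ 1 := (O.valuation_le_one_iff x).2 hxO
      have hvden : O.valuation (algebraMap E[X] (RatFunc E) x.denom) < 1 := hdP
      have hlt : O.valuation x * O.valuation (algebraMap E[X] (RatFunc E) x.denom) < 1 := by
        calc O.valuation x * O.valuation (algebraMap E[X] (RatFunc E) x.denom)
            ≤ 1 * O.valuation (algebraMap E[X] (RatFunc E) x.denom) := mul_le_mul_left hvx _
          _ = O.valuation (algebraMap E[X] (RatFunc E) x.denom) := one_mul _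
          _ < 1 := hvden
      rw [← map_mul, hxden, hnum1] at hlt
      exact lt_irrefl _ hlt
    · rintro ⟨f, g, hg, rfl⟩
      have hgP : g ∉ P := fun hgP => hg ((hmemP g).1 hgP)
      have hgP' : ¬ O.valuation (algebraMap E[X] (RatFunc E) g) < 1 := hgP
      have hg1 : O.valuation (algebraMap E[X] (RatFunc E) g) = 1 :=
        le_antisymm ((O.valuation_le_one_iff _).2 (hpoly _)) (not_lt.1 hgP')
      apply O.mem_of_valuation_le_one
      rw [div_eq_mul_inv, map_mul, map_inv₀, hg1, inv_one, mul_one]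
      exact (O.valuation_le_one_iff _).2 (hpoly f)
  · -- infinite place
    right
    have hXinv : (RatFunc.X : RatFunc E)⁻¹ ∈ O := (O.mem_or_inv_mem _).resolve_left hX
    have hXv : O.valuation (RatFunc.X : RatFunc E)⁻¹ < 1 := val_inv_lt_one hX
    have hXne : (RatFunc.X : RatFunc E) ≠ 0 := RatFunc.X_ne_zero
    have key : ∀ (n : ℕ) (f : E[X]), f.natDegree ≤ n → ∃ y ∈ O,
        algebraMap E[X] (RatFunc E) f * (RatFunc.X : RatFunc E)⁻¹ ^ n
          = RatFunc.C (f.coeff n) + (RatFunc.X : RatFunc E)⁻¹ * y := by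
      intro n
      induction n with
      | zero =>
        intro f hf
        refine ⟨0, O.zero_mem, ?_⟩
        have hfc : f = Polynomial.C (f.coeff 0) := Polynomial.eq_C_of_natDegree_le_zero hf
        rw [pow_zero, mul_one, mul_zero, add_zero]
        conv_lhs => rw [hfc]
        rw [RatFunc.algebraMap_C]
      | succ n ih =>
        intro f hf
        obtain ⟨y, hy, hrep⟩ := ih f.divX (by
          have h1 := Polynomial.natDegree_divX_eq_natDegree_tsub_one (p := f)
          omega)
        refine ⟨y + RatFunc.C (f.coeff 0) * (RatFunc.X : RatFunc E)⁻¹ ^ n,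
          O.add_mem _ _ hy (O.mul_mem _ _ (C_mem hE _) (pow_mem hXinv n)), ?_⟩
        have hfeq : algebraMap E[X] (RatFunc E) f
            = RatFunc.X * algebraMap E[X] (RatFunc E) f.divX + RatFunc.C (f.coeff 0) := by
          conv_lhs => rw [← Polynomial.X_mul_divX_add f]
          rw [map_add, map_mul, RatFunc.algebraMap_X, RatFunc.algebraMap_C]
        rw [Polynomial.coeff_divX] at hrep
        have hXX : (RatFunc.X : RatFunc E) * (RatFunc.X : RatFunc E)⁻¹ = 1 :=
          mul_inv_cancel₀ hXne
        rw [hfeq, pow_succ]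
        linear_combination (algebraMap E[X] (RatFunc E) f.divX
          * (RatFunc.X : RatFunc E)⁻¹ ^ n) * hXX + hrep
    have hle : infO ≤ O := by
      intro x hx
      by_cases hx0 : x = 0
      · rw [hx0]; exact O.zero_mem
      have hdeg : x.num.natDegree ≤ x.denom.natDegree := by
        have h1 := mem_infO.mp hx
        unfold RatFunc.intDegree at h1
        omega
      obtain ⟨y, hy, hyrep⟩ := key x.denom.natDegree x.num hdeg
      obtain ⟨z, hz, hzrep⟩ := key x.denom.natDegree x.denom le_rfl
      have hc : x.denom.coeff x.denom.natDegree ≠ 0 :=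
        Polynomial.leadingCoeff_ne_zero.mpr (RatFunc.denom_ne_zero x)
      have hu1 : O.valuation (algebraMap E[X] (RatFunc E) x.denom
          * (RatFunc.X : RatFunc E)⁻¹ ^ x.denom.natDegree) = 1 := by
        rw [hzrep]
        have hlt : O.valuation ((RatFunc.X : RatFunc E)⁻¹ * z)
            < O.valuation (RatFunc.C (x.denom.coeff x.denom.natDegree)) := by
          rw [val_C_eq_one hE hc, map_mul]
          calc O.valuation (RatFunc.X : RatFunc E)⁻¹ * O.valuation z
              ≤ O.valuation (RatFunc.X : RatFunc E)⁻¹ * 1 :=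
                mul_le_mul_right ((O.valuation_le_one_iff _).2 hz) _
            _ = O.valuation (RatFunc.X : RatFunc E)⁻¹ := mul_one _
            _ < 1 := hXv
        rw [Valuation.map_add_eq_of_lt_left _ hlt, val_C_eq_one hE hc]
      have hxu : x * (algebraMap E[X] (RatFunc E) x.denom
          * (RatFunc.X : RatFunc E)⁻¹ ^ x.denom.natDegree)
          = algebraMap E[X] (RatFunc E) x.num
            * (RatFunc.X : RatFunc E)⁻¹ ^ x.denom.natDegree := by
        have hxd : x * algebraMap E[X] (RatFunc E) x.denom
            = algebraMap E[X] (RatFunc E) x.num := (num_eq_mul_denom x).symm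
        rw [← mul_assoc, hxd]
      apply O.mem_of_valuation_le_one
      have hfin : O.valuation x * O.valuation (algebraMap E[X] (RatFunc E) x.denom
          * (RatFunc.X : RatFunc E)⁻¹ ^ x.denom.natDegree) ≤ 1 := by
        rw [← map_mul, hxu, hyrep]
        exact (O.valuation_le_one_iff _).2
          (O.add_mem _ _ (C_mem hE _) (O.mul_mem _ _ hXinv hy))
      rwa [hu1, mul_one] at hfin
    refine le_antisymm ?_ hle
    intro x hxO
    rw [mem_infO]
    by_contra hpos
    push_neg at hpos
    have hx0 : x ≠ 0 := by
      rintro rfl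
      rw [RatFunc.intDegree_zero] at hpos
      exact lt_irrefl _ hpos
    have hyO : (RatFunc.X : RatFunc E) * x⁻¹ ∈ infO (E := E) := by
      rw [mem_infO, RatFunc.intDegree_mul hXne (inv_ne_zero hx0),
        RatFunc.intDegree_X, intDeg_inv hx0]
      omega
    have h2 : O.valuation x⁻¹ < 1 := by
      have hrw : x⁻¹ = (RatFunc.X : RatFunc E)⁻¹ * (RatFunc.X * x⁻¹) := by
        rw [← mul_assoc, inv_mul_cancel₀ hXne, one_mul]
      rw [hrw, map_mul]
      calc O.valuation (RatFunc.X : RatFunc E)⁻¹ * O.valuation (RatFunc.X * x⁻¹)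
          ≤ O.valuation (RatFunc.X : RatFunc E)⁻¹ * 1 :=
            mul_le_mul_right ((O.valuation_le_one_iff _).2 (hle hyO)) _
        _ = O.valuation (RatFunc.X : RatFunc E)⁻¹ := mul_one _
        _ < 1 := hXv
    have h3 : O.valuation x ≤ 1 := (O.valuation_le_one_iff x).2 hxO
    have hcon : (1 : O.ValueGroup) < 1 := by
      calc (1 : O.ValueGroup) = O.valuation (x * x⁻¹) := by
            rw [mul_inv_cancel₀ hx0, map_one]
        _ = O.valuation x * O.valuation x⁻¹ := map_mul _ _ _
        _ ≤ 1 * O.valuation x⁻¹ := mul_le_mul_left h3 _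
        _ = O.valuation x⁻¹ := one_mul _
        _ < 1 := h2
    exact lt_irrefl _ hcon

theorem locO_eq_of_dvd {p q : E[X]} (hp : Prime p) (hq : Prime q) (h : p ∣ q) :
    locO p hp = locO q hq := by
  have ha : Associated p q := hp.associated_of_dvd hq h
  ext x
  constructor
  · rintro ⟨f, g, hg, rfl⟩
    exact ⟨f, g, fun hd => hg (ha.dvd_iff_dvd_left.mpr hd), rfl⟩
  · rintro ⟨f, g, hg, rfl⟩
    exact ⟨f, g, fun hd => hg (ha.dvd_iff_dvd_left.mp hd), rfl⟩

theorem divSupp_cond_locO {p : E[X]} (hp : Prime p) {f g : E[X]}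
    (hcop : IsCoprime f g) (hf : f ≠ 0) (hg : g ≠ 0) {x : RatFunc E}
    (hx : x = algebraMap E[X] (RatFunc E) f / algebraMap E[X] (RatFunc E) g) :
    (x ∉ locO p hp ∨ x⁻¹ ∉ locO p hp) ↔ (p ∣ f ∨ p ∣ g) := by
  rw [mem_locO_iff hp hcop hg hx, inv_mem_locO_iff hp hcop hf hx]
  tauto

theorem divSupp_cond_infO {x : RatFunc E} (hx : x ≠ 0) :
    (x ∉ infO (E := E) ∨ x⁻¹ ∉ infO (E := E)) ↔ x.intDegree ≠ 0 := by
  rw [mem_infO, mem_infO, intDeg_inv hx]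
  omega

theorem ne_const {ξ : RatFunc E} {O : ValuationSubring (RatFunc E)}
    (hO : O ∈ divSupp (algebraMap E (RatFunc E)).fieldRange ξ) :
    ξ ∉ (algebraMap E (RatFunc E)).fieldRange := by
  rintro ⟨c, rfl⟩
  obtain ⟨⟨hsub, -⟩, h | h⟩ := hO
  · exact h (hsub ⟨c, rfl⟩)
  · exact h (by rw [← map_inv₀]; exact hsub ⟨c⁻¹, rfl⟩)

theorem supp_pair {p q : E[X]} (hp : Prime p) (hq : Prime q)
    (hpq : ¬ p ∣ q) (hqp : ¬ q ∣ p) :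
    ∃ ξ : RatFunc E, ξ ∉ (algebraMap E (RatFunc E)).fieldRange ∧
      divSupp (algebraMap E (RatFunc E)).fieldRange ξ = {locO p hp, locO q hq} := by
  have hm : 0 < q.natDegree := hq.irreducible.natDegree_pos
  have hn : 0 < p.natDegree := hp.irreducible.natDegree_pos
  set f := p ^ q.natDegree with hfdef
  set g := q ^ p.natDegree with hgdef
  have hcop : IsCoprime f g := (hp.coprime_iff_not_dvd.mpr hpq).pow
  have hf0 : f ≠ 0 := pow_ne_zero _ hp.ne_zero
  have hg0 : g ≠ 0 := pow_ne_zero _ hq.ne_zero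
  set ξ := algebraMap E[X] (RatFunc E) f / algebraMap E[X] (RatFunc E) g with hξ
  have hξ0 : ξ ≠ 0 :=
    div_ne_zero (RatFunc.algebraMap_ne_zero hf0) (RatFunc.algebraMap_ne_zero hg0)
  have hdeg : ξ.intDegree = 0 := by
    rw [hξ, div_eq_mul_inv,
      RatFunc.intDegree_mul (RatFunc.algebraMap_ne_zero hf0)
        (inv_ne_zero (RatFunc.algebraMap_ne_zero hg0)),
      intDeg_inv (RatFunc.algebraMap_ne_zero hg0),
      RatFunc.intDegree_polynomial, RatFunc.intDegree_polynomial,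
      hfdef, hgdef, Polynomial.natDegree_pow, Polynomial.natDegree_pow]
    push_cast
    ring
  have hsupp : divSupp (algebraMap E (RatFunc E)).fieldRange ξ
      = {locO p hp, locO q hq} := by
    ext O
    simp only [divSupp, Set.mem_setOf_eq, Set.mem_insert_iff, Set.mem_singleton_iff]
    constructor
    · rintro ⟨hOpl, hcond⟩
      rcases classify O hOpl with ⟨r, hr, rfl⟩ | rfl
      · rw [divSupp_cond_locO hr hcop hf0 hg0 hξ] at hcond
        rcases hcond with hd | hd
        · exact Or.inl (locO_eq_of_dvd hr hp (hr.dvd_of_dvd_pow hd))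
        · exact Or.inr (locO_eq_of_dvd hr hq (hr.dvd_of_dvd_pow hd))
      · rw [divSupp_cond_infO hξ0] at hcond
        exact absurd hdeg hcond
    · rintro (rfl | rfl)
      · exact ⟨isPlace_locO p hp, (divSupp_cond_locO hp hcop hf0 hg0 hξ).mpr
          (Or.inl (dvd_pow_self p hm.ne'))⟩
      · exact ⟨isPlace_locO q hq, (divSupp_cond_locO hq hcop hf0 hg0 hξ).mpr
          (Or.inr (dvd_pow_self q hn.ne'))⟩
  exact ⟨ξ, ne_const (show locO p hp ∈ _ by rw [hsupp]; exact Set.mem_insert _ _), hsupp⟩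

theorem supp_fin_inf {p : E[X]} (hp : Prime p) :
    ∃ ξ : RatFunc E, ξ ∉ (algebraMap E (RatFunc E)).fieldRange ∧
      divSupp (algebraMap E (RatFunc E)).fieldRange ξ = {locO p hp, infO} := by
  have hn : 0 < p.natDegree := hp.irreducible.natDegree_pos
  set ξ := algebraMap E[X] (RatFunc E) p with hξdef
  have hξ : ξ = algebraMap E[X] (RatFunc E) p / algebraMap E[X] (RatFunc E) 1 := by
    rw [map_one, div_one]
  have hcop : IsCoprime p (1 : E[X]) := isCoprime_one_right
  have hξ0 : ξ ≠ 0 := RatFunc.algebraMap_ne_zero hp.ne_zero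
  have hdeg : ξ.intDegree = p.natDegree := RatFunc.intDegree_polynomial
  have hsupp : divSupp (algebraMap E (RatFunc E)).fieldRange ξ = {locO p hp, infO} := by
    ext O
    simp only [divSupp, Set.mem_setOf_eq, Set.mem_insert_iff, Set.mem_singleton_iff]
    constructor
    · rintro ⟨hOpl, hcond⟩
      rcases classify O hOpl with ⟨r, hr, rfl⟩ | rfl
      · rw [divSupp_cond_locO hr hcop hp.ne_zero one_ne_zero hξ] at hcond
        rcases hcond with hd | hd
        · exact Or.inl (locO_eq_of_dvd hr hp hd)
        · exact absurd (isUnit_of_dvd_one hd) hr.not_unit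
      · exact Or.inr rfl
    · rintro (rfl | rfl)
      · exact ⟨isPlace_locO p hp, (divSupp_cond_locO hp hcop hp.ne_zero one_ne_zero hξ).mpr
          (Or.inl dvd_rfl)⟩
      · refine ⟨isPlace_infO, (divSupp_cond_infO hξ0).mpr ?_⟩
        rw [hdeg]
        exact_mod_cast hn.ne'
  exact ⟨ξ, ne_const (show locO p hp ∈ _ by rw [hsupp]; exact Set.mem_insert _ _), hsupp⟩

end PropertyStarAux

/-- **Theorem (Statement 14).** A purely transcendental extension `F = E(v)` of
transcendence degree 1 has property `(*)`: for any two distinct places `O₁ ≠ O₂`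
of `F` over `E` there is `ξ ∈ F ∖ E` with `supp(div ξ) = {O₁, O₂}`. -/
theorem property_star_of_ratFunc
    {E : Type*} [Field E]
    (O₁ O₂ : ValuationSubring (RatFunc E))
    (h₁ : IsPlaceOver (algebraMap E (RatFunc E)).fieldRange O₁)
    (h₂ : IsPlaceOver (algebraMap E (RatFunc E)).fieldRange O₂)
    (hne : O₁ ≠ O₂) :
    ∃ ξ : RatFunc E, ξ ∉ (algebraMap E (RatFunc E)).fieldRange ∧
      divSupp (algebraMap E (RatFunc E)).fieldRange ξ = {O₁, O₂} := by
  rcases PropertyStarAux.classify O₁ h₁ with ⟨p, hp, rfl⟩ | rfl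
  · rcases PropertyStarAux.classify O₂ h₂ with ⟨q, hq, rfl⟩ | rfl
    · have hpq : ¬ p ∣ q := fun h => hne (PropertyStarAux.locO_eq_of_dvd hp hq h)
      have hqp : ¬ q ∣ p := fun h => hne (PropertyStarAux.locO_eq_of_dvd hq hp h).symm
      exact PropertyStarAux.supp_pair hp hq hpq hqp
    · exact PropertyStarAux.supp_fin_inf hp
  · rcases PropertyStarAux.classify O₂ h₂ with ⟨q, hq, rfl⟩ | rfl
    · obtain ⟨ξ, hξ1, hξ2⟩ := PropertyStarAux.supp_fin_inf hq
      exact ⟨ξ, hξ1, by rw [hξ2, Set.pair_comm]⟩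
    · exact absurd rfl hne
end
end

section
/- Let k be an algebraically closed field of characteristic p > 0 and A = k[X,Y]. The polynomial F = X^p + Y^{p+1} satisfies A^p ⊆ k[F,Y], hence Frac A is purely inseparable over k(F,Y) and F is a good pseudo field generator; moreover F is not a field generator in A (there is no G ∈ Frac A with k(F,G) = Frac A). -/
set_option maxHeartbeats 1000000

open MvPolynomial

noncomputable section

abbrev Poly2 (k : Type*) [Field k] := MvPolynomial (Fin 2) k
abbrev Frac2 (k : Type*) [Field k] := FractionRing (Poly2 k)

variable {k : Type*} [Field k]

/-- `A/(F)` is `k`-rational: `F` is irreducible and the fraction field of `A/(F)`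
is purely transcendental of transcendence degree 1 over `k`. -/
def KRational (F : Poly2 k) : Prop :=
  Irreducible F ∧
    Nonempty (FractionRing (Poly2 k ⧸ Ideal.span ({F} : Set (Poly2 k))) ≃ₐ[k] RatFunc k)

/-- `F` is a generally rational polynomial: `A/(F-λ)` is `k`-rational
for all but finitely many `λ ∈ k`. -/
def GenerallyRational (F : Poly2 k) : Prop :=
  {l : k | ¬ KRational (F - C l)}.Finite

/-- The image of `A = k[X,Y]` in its fraction field. -/
def emb (q : Poly2 k) : Frac2 k := algebraMap (Poly2 k) (Frac2 k) q

/-- The subfield `k(F,G)` of `Frac A`. -/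
def KFG (F : Poly2 k) (G : Frac2 k) : Subfield (Frac2 k) :=
  Subfield.closure (Set.range (algebraMap k (Frac2 k)) ∪ {emb F, G})

/-- The subfield `k(F)` of `Frac A`. -/
def KF (F : Poly2 k) : Subfield (Frac2 k) :=
  Subfield.closure (Set.range (algebraMap k (Frac2 k)) ∪ {emb F})

/-- A field extension `L/E` is purely inseparable iff every `x ∈ L` satisfies
`x ^ q ^ n ∈ E` for some `n`, where `q` is the exponential characteristic
(`q = 1` in characteristic zero). -/
def PurelyInsepOver {L : Type*} [Field L] (E : Subfield L) (q : ℕ) : Prop :=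
  ∀ x : L, ∃ n : ℕ, x ^ q ^ n ∈ E

/-- `F` is a pseudo field generator in `A`. -/
def IsPFG (F : Poly2 k) : Prop :=
  ∃ G : Frac2 k, PurelyInsepOver (KFG F G) (ringExpChar k)

/-- `F` is a good pseudo field generator in `A` (the auxiliary `G` can be taken in `A`). -/
def IsGoodPFG (F : Poly2 k) : Prop :=
  ∃ G : Poly2 k, PurelyInsepOver (KFG F (emb G)) (ringExpChar k)

/-- `F` is a field generator in `A`. -/
def IsFieldGen (F : Poly2 k) : Prop :=
  ∃ G : Frac2 k, KFG F G = ⊤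

/-- The localization `𝒜 = S⁻¹A`, `S = k[F] ∖ {0}`, viewed as a subset of `Frac A`. -/
def locSet (F : Poly2 k) : Set (Frac2 k) :=
  {x | ∃ (a : Poly2 k) (s : Polynomial k), s ≠ 0 ∧
    x = emb a / emb (Polynomial.aeval F s)}

/-- A dicritical of `F`: a valuation ring of `Frac A` over `k(F)`, distinct from `Frac A`,
not containing `𝒜 = S⁻¹A`. -/
def IsDicritical (F : Poly2 k) (O : ValuationSubring (Frac2 k)) : Prop :=
  (KF F : Set (Frac2 k)) ⊆ O ∧ O ≠ ⊤ ∧ ¬ (locSet F ⊆ O)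

/-- The dicritical `O` is purely inseparable: its residue field is a purely inseparable
extension of `k(F)`. -/
def IsPIDicritical (F : Poly2 k) (O : ValuationSubring (Frac2 k)) : Prop :=
  IsDicritical F O ∧
    ∀ x : IsLocalRing.ResidueField O, ∃ (n : ℕ) (y : O),
      (y : Frac2 k) ∈ KF F ∧ x ^ (ringExpChar k) ^ n = IsLocalRing.residue O y

/-! Since `X ^ p = F - Y ^ (p + 1)`, every `p`-th power of `k[X, Y]` lies in `k[F, Y]`, so
`k(X, Y)` is purely inseparable of exponent one over `k(F, Y)`.

If `k(F, G) = k(X, Y)`, then `F, G` are algebraically independent (the transcendence degree is 2),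
so `X ↦ F, Y ↦ G` is a `k`-automorphism of `k(X, Y)`; pulling back along it gives
`X = a ^ p + b ^ (p + 1)` with `a, b ∈ k(X, Y)`. Applying `∂/∂X` kills `a ^ p` and leaves
`b ^ p * ∂b/∂X = 1`. With `b = A / B` in lowest terms in `k[Y][X]` this reads
`B ^ (p + 2) = A ^ p * (A' B - A B')`: so `A ∣ B ^ (p + 2)` is a unit, then `B ∣ B'`, so `B' = 0`
and `B ^ (p + 2) = 0`. -/

theorem pow_mem_adjoin_image_pow {R A : Type*} [CommSemiring R] [CommSemiring A] [Algebra R A]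
    (p : ℕ) [ExpChar A p] {s : Set A} {x : A} (hx : x ∈ Algebra.adjoin R s) :
    x ^ p ∈ Algebra.adjoin R ((· ^ p) '' s) := by
  induction hx using Algebra.adjoin_induction with
  | mem x hx => exact Algebra.subset_adjoin ⟨x, hx, rfl⟩
  | algebraMap r => rw [← map_pow]; exact Subalgebra.algebraMap_mem _ _
  | add x y _ _ hx hy => rw [add_pow_expChar]; exact add_mem hx hy
  | mul x y _ _ hx hy => rw [mul_pow]; exact mul_mem hx hy

theorem isAlgebraic_algebraAdjoin_of_adjoin_eq_top {F E : Type*} [Field F] [Field E] [Algebra F E]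
    {S : Set E} (h : IntermediateField.adjoin F S = ⊤) :
    Algebra.IsAlgebraic (Algebra.adjoin F S) E := by
  refine ⟨fun z => ?_⟩
  obtain ⟨r, hr, s, hs, rfl⟩ :=
    IntermediateField.mem_adjoin_iff_div.mp (h ▸ IntermediateField.mem_top (x := z))
  rcases eq_or_ne s 0 with rfl | hs0
  · rw [div_zero]; exact isAlgebraic_zero
  · refine IsAlgebraic.of_mul (y := s) (mem_nonZeroDivisors_of_ne_zero hs0)
      (isAlgebraic_algebraMap (⟨s, hs⟩ : Algebra.adjoin F S)) ?_
    rw [mul_div_cancel₀ _ hs0]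
    exact isAlgebraic_algebraMap (⟨r, hr⟩ : Algebra.adjoin F S)

/-- Clearing the denominator of `b = A / B` in `x = a ^ n + b ^ (n + 1)`: the element
`T = a * B ^ 2` has `T ^ n ∈ S`, hence lies in `S` by integral closedness. -/
theorem IsFractionRing.exists_isRelPrime_of_algebraMap_eq_pow_add_pow {S K : Type*} [CommRing S]
    [IsDomain S] [UniqueFactorizationMonoid S] [Field K] [Algebra S K] [IsFractionRing S K]
    {n : ℕ} (hn : 0 < n) {x : S} {a b : K} (h : algebraMap S K x = a ^ n + b ^ (n + 1)) :
    ∃ A B T : S, IsRelPrime A B ∧ B ≠ 0 ∧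
      x * B ^ (2 * n) = T ^ n + A ^ (n + 1) * B ^ (n - 1) := by
  set A := IsFractionRing.num S b
  set B : S := (IsFractionRing.den S b : S)
  have hB : algebraMap S K B ≠ 0 :=
    IsFractionRing.to_map_ne_zero_of_mem_nonZeroDivisors (IsFractionRing.den S b).2
  have hb : b * algebraMap S K B = algebraMap S K A := by
    rw [← IsFractionRing.mk'_num_den' S b, div_mul_cancel₀ _ hB]
  obtain ⟨m, rfl⟩ : ∃ m, n = m + 1 := ⟨n - 1, by omega⟩
  have hpow : (a * algebraMap S K B ^ 2) ^ (m + 1)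
      = algebraMap S K (x * B ^ (2 * (m + 1)) - A ^ (m + 1 + 1) * B ^ m) := by
    simp only [map_sub, map_mul, map_pow, h, ← hb]
    ring
  obtain ⟨T, hT⟩ := IsIntegrallyClosed.exists_algebraMap_eq_of_isIntegral_pow hn
    (hpow ▸ isIntegral_algebraMap)
  refine ⟨A, B, T, IsFractionRing.num_den_reduced S b, nonZeroDivisors.coe_ne_zero _,
    IsFractionRing.injective S K ?_⟩
  rw [Nat.add_sub_cancel, map_add, map_pow, hT, hpow, map_sub]
  ring

namespace Polynomial

variable {R : Type*} [CommRing R]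

theorem derivative_pow_char (p : ℕ) [CharP R p] (u : R[X]) : derivative (u ^ p) = 0 := by
  rw [derivative_pow, CharP.cast_eq_zero, map_zero, zero_mul, zero_mul]

variable [IsDomain R] [UniqueFactorizationMonoid R]

/-- The rational function `b = A / B` never satisfies `b ^ m * b' = 1` when `m > 0`. -/
theorem pow_add_two_ne_pow_mul_wronskian {A B : R[X]} (hAB : IsRelPrime A B) (hB : B ≠ 0)
    {m : ℕ} (hm : 0 < m) : B ^ (m + 2) ≠ A ^ m * wronskian B A := by
  intro h
  have hA : IsUnit A := by
    refine (hAB.pow_right (n := m + 2)) dvd_rfl ⟨A ^ (m - 1) * wronskian B A, ?_⟩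
    rw [h, ← mul_assoc, ← pow_succ', Nat.sub_add_cancel hm]
  obtain ⟨c, -, rfl⟩ := Polynomial.isUnit_iff.mp hA
  have hB' : derivative B = 0 := by
    rw [← dvd_derivative_iff]
    refine (hA.pow (m + 1)).dvd_mul_left.mp ⟨-B ^ (m + 1), ?_⟩
    rw [wronskian, derivative_C] at h
    linear_combination h
  rw [wronskian, hB', derivative_C] at h
  have : B ^ (m + 2) = 0 := by simpa using h
  exact hB (pow_eq_zero_iff (Nat.succ_ne_zero _) |>.mp this)

/-- Differentiating in `X` kills the `p`-th powers and leaves `B ^ (p + 2) = A ^ p * W(B, A)`. -/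
theorem X_mul_pow_ne_pow_add_pow_mul_pow {p : ℕ} (hp : p.Prime) [CharP R p] {A B : R[X]}
    (hAB : IsRelPrime A B) (hB : B ≠ 0) (T : R[X]) :
    X * B ^ (2 * p) ≠ T ^ p + A ^ (p + 1) * B ^ (p - 1) := by
  intro h
  obtain ⟨q, rfl⟩ : ∃ q, p = q + 2 := ⟨p - 2, by have := hp.two_le; omega⟩
  have h' : X * (B ^ 2) ^ (q + 2) = T ^ (q + 2) + A ^ (q + 2) * (A * B ^ (q + 1)) := by
    rw [show q + 2 - 1 = q + 1 by omega] at h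
    linear_combination h
  have hD := congrArg derivative h'
  simp only [derivative_mul, derivative_add, derivative_pow_char, derivative_X,
    derivative_pow_succ] at hD
  have hq : (C ((q : R) + 1) : R[X]) = -1 := by
    have := CharP.cast_eq_zero R (q + 2)
    rw [← map_one C, ← map_neg C]; congr 1; push_cast at this; linear_combination this
  rw [hq] at hD
  apply pow_add_two_ne_pow_mul_wronskian hAB hB (m := q + 2) (by omega)
  apply mul_left_cancel₀ (pow_ne_zero q hB)
  rw [wronskian]
  linear_combination hD

end Polynomial

theorem pow_mem_adjoin_X_zero_pow_add_X_one_pow {p : ℕ} (hp : p.Prime) [CharP k p]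
    (a : Poly2 k) : a ^ p ∈ Algebra.adjoin k {(X 0 : Poly2 k) ^ p + X 1 ^ (p + 1), X 1} := by
  have : ExpChar (Poly2 k) p := ExpChar.prime hp
  have ha : a ∈ Algebra.adjoin k (Set.range X) := by rw [adjoin_range_X]; trivial
  refine Algebra.adjoin_le ?_ (pow_mem_adjoin_image_pow p ha)
  have hY : (X 1 : Poly2 k) ∈ Algebra.adjoin k {(X 0 : Poly2 k) ^ p + X 1 ^ (p + 1), X 1} :=
    Algebra.subset_adjoin (Set.mem_insert_of_mem _ (Set.mem_singleton _))
  rintro _ ⟨_, ⟨i, rfl⟩, rfl⟩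
  fin_cases i
  · simpa using sub_mem (Algebra.subset_adjoin (Set.mem_insert _ _)) (pow_mem hY (p + 1))
  · exact pow_mem hY p

theorem KFG_eq_adjoin_toSubfield (F : Poly2 k) (G : Frac2 k) :
    KFG F G = (IntermediateField.adjoin k {emb F, G}).toSubfield := rfl

theorem emb_mem_KFG_of_mem_adjoin {F G q : Poly2 k} (hq : q ∈ Algebra.adjoin k {F, G}) :
    emb q ∈ KFG F (emb G) := by
  rw [KFG_eq_adjoin_toSubfield]
  apply IntermediateField.algebra_adjoin_le_adjoin k
  have : Algebra.adjoin k {emb F, emb G}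
      = (Algebra.adjoin k {F, G}).map (IsScalarTower.toAlgHom k (Poly2 k) (Frac2 k)) := by
    rw [AlgHom.map_adjoin, Set.image_pair]; rfl
  exact this ▸ ⟨q, hq, rfl⟩

theorem pow_mem_KFG_X_zero_pow_add_X_one_pow {p : ℕ} (hp : p.Prime) [CharP k p] (z : Frac2 k) :
    z ^ p ∈ KFG ((X 0 : Poly2 k) ^ p + X 1 ^ (p + 1)) (emb (X 1)) := by
  obtain ⟨a, b, -, rfl⟩ := IsFractionRing.div_surjective (A := Poly2 k) z
  rw [div_pow, ← map_pow, ← map_pow]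
  exact div_mem (emb_mem_KFG_of_mem_adjoin (pow_mem_adjoin_X_zero_pow_add_X_one_pow hp a))
    (emb_mem_KFG_of_mem_adjoin (pow_mem_adjoin_X_zero_pow_add_X_one_pow hp b))

theorem exists_algEquiv_emb_X_zero_of_KFG_eq_top {F : Poly2 k} {G : Frac2 k}
    (h : KFG F G = ⊤) : ∃ σ : Frac2 k ≃ₐ[k] Frac2 k, σ (emb (X 0)) = emb F := by
  have hgen : IntermediateField.adjoin k (Set.range ![emb F, G]) = ⊤ := by
    rw [Matrix.range_cons, Matrix.range_cons, Matrix.range_empty, Set.union_empty,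
      Set.singleton_union]
    exact IntermediateField.toSubfield_injective (by rw [← KFG_eq_adjoin_toSubfield, h]; rfl)
  have := isAlgebraic_algebraAdjoin_of_adjoin_eq_top hgen
  have hX : AlgebraicIndependent k (emb ∘ (X : Fin 2 → Poly2 k)) :=
    (algebraicIndependent_X (Fin 2) k).map' (f := IsScalarTower.toAlgHom k (Poly2 k) (Frac2 k))
      (IsFractionRing.injective _ _)
  have hind : AlgebraicIndependent k ![emb F, G] :=
    (Algebra.IsAlgebraic.isTranscendenceBasis_of_lift_le_trdeg_of_finite k _
      hX.lift_cardinalMk_le_trdeg).1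
  refine ⟨hind.aevalEquivField.trans
    ((IntermediateField.equivOfEq hgen).trans IntermediateField.topEquiv), ?_⟩
  change (hind.aevalEquivField (algebraMap _ _ (X 0)) : Frac2 k) = _
  rw [hind.aevalEquivField_algebraMap_apply_coe, aeval_X]
  rfl

theorem emb_X_zero_ne_pow_add_pow {p : ℕ} (hp : p.Prime) [CharP k p] (a b : Frac2 k) :
    emb (X 0) ≠ a ^ p + b ^ (p + 1) := by
  intro h
  obtain ⟨A, B, T, hAB, hB, hT⟩ :=
    IsFractionRing.exists_isRelPrime_of_algebraMap_eq_pow_add_pow hp.pos h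
  let e := (finSuccEquiv k 1).toRingEquiv
  refine Polynomial.X_mul_pow_ne_pow_add_pow_mul_pow hp (A := e A) (B := e B)
    (IsRelPrime.of_map e.symm (by simpa using hAB)) (by simpa using hB) (e T) ?_
  simpa [e, finSuccEquiv_X_zero] using congrArg e hT

theorem not_isFieldGen_X_zero_pow_add_X_one_pow {p : ℕ} (hp : p.Prime) [CharP k p] :
    ¬ IsFieldGen ((X 0 : Poly2 k) ^ p + X 1 ^ (p + 1)) := by
  rintro ⟨G, hG⟩
  obtain ⟨σ, hσ⟩ := exists_algEquiv_emb_X_zero_of_KFG_eq_top hG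
  refine emb_X_zero_ne_pow_add_pow hp (σ.symm (emb (X 0))) (σ.symm (emb (X 1))) (σ.injective ?_)
  rw [map_add, map_pow, map_pow, σ.apply_symm_apply, σ.apply_symm_apply, hσ, emb, map_add,
    map_pow, map_pow]
  rfl

theorem example_Xp_add_Ypp1_general
    {k : Type*} [Field k] (p : ℕ) (hp : p.Prime) [CharP k p] :
    (∀ a : Poly2 k, a ^ p ∈ Algebra.adjoin k
        ({(X 0 : Poly2 k) ^ p + (X 1) ^ (p + 1), X 1} : Set (Poly2 k))) ∧
      PurelyInsepOver (KFG ((X 0 : Poly2 k) ^ p + (X 1) ^ (p + 1)) (emb (X 1)))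
        (ringExpChar k) ∧
      IsGoodPFG ((X 0 : Poly2 k) ^ p + (X 1) ^ (p + 1)) ∧
      ¬ IsFieldGen ((X 0 : Poly2 k) ^ p + (X 1) ^ (p + 1)) := by
  have : ExpChar k p := ExpChar.prime hp
  have hinsep : PurelyInsepOver (KFG ((X 0 : Poly2 k) ^ p + X 1 ^ (p + 1)) (emb (X 1)))
      (ringExpChar k) := fun z =>
    ⟨1, by rw [ringExpChar.eq k p, pow_one]; exact pow_mem_KFG_X_zero_pow_add_X_one_pow hp z⟩
  exact ⟨pow_mem_adjoin_X_zero_pow_add_X_one_pow hp, hinsep, ⟨X 1, hinsep⟩,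
    not_isFieldGen_X_zero_pow_add_X_one_pow hp⟩

/-- **Theorem (Statement 17).** Let `char k = p > 0` and `F = X^p + Y^{p+1} ∈ A = k[X,Y]`.
Then `A^p ⊆ k[F,Y]`, `Frac A` is purely inseparable over `k(F,Y)`, so `F` is a good
pseudo field generator in `A`; but `F` is not a field generator in `A`. -/
theorem example_Xp_add_Ypp1
    {k : Type*} [Field k] [IsAlgClosed k] (p : ℕ) (hp : p.Prime) [CharP k p] :
    (∀ a : Poly2 k, a ^ p ∈ Algebra.adjoin k
        ({(X 0 : Poly2 k) ^ p + (X 1) ^ (p + 1), X 1} : Set (Poly2 k))) ∧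
      PurelyInsepOver (KFG ((X 0 : Poly2 k) ^ p + (X 1) ^ (p + 1)) (emb (X 1)))
        (ringExpChar k) ∧
      IsGoodPFG ((X 0 : Poly2 k) ^ p + (X 1) ^ (p + 1)) ∧
      ¬ IsFieldGen ((X 0 : Poly2 k) ^ p + (X 1) ^ (p + 1)) :=
  example_Xp_add_Ypp1_general p hp
end
end

section
/- Let L/L0 be a purely inseparable algebraic extension of fields and K/k0 the corresponding extension of constant fields with K purely inseparable over k0 (k0 ⊆ L0, K ⊆ L, K ∩ L0 = k0, L = K·L0). Then the map from the set of valuation rings of L over K (distinct from L) to the set of valuation rings of L0 over k0 (distinct from L0), given by B ↦ B ∩ L0, is a bijection. -/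
/-!
In characteristic exponent `p`, a valuation ring contains `x` iff it contains `x ^ p ^ n`. So when
every element of `L` has some `p ^ n`-th power in `L₀`, a valuation ring `O` of `L` is recovered
from `O ∩ L₀` as `{x | ∃ n, x ^ p ^ n ∈ O ∩ L₀}`, and the same formula extends every valuation
ring of `L₀` to one of `L`: restriction is a bijection between all valuation rings. It matches
`⊤` with `⊤`, and since `K` is purely inseparable over `k₀`, a valuation ring contains `K` iff it
contains `k₀`.
-/

namespace Subring

variable {R : Type*} [CommRing R] (p : ℕ) [ExpChar R p]

theorem monotone_comap_iterateFrobenius (S : Subring R) :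
    Monotone fun n => S.comap (iterateFrobenius R p n) := by
  intro m n hmn x hx
  simp only [mem_comap, iterateFrobenius_def] at hx ⊢
  rw [← Nat.sub_add_cancel hmn, pow_add, pow_mul']
  exact pow_mem hx _

theorem mem_iSup_comap_iterateFrobenius (S : Subring R) {x : R} :
    x ∈ ⨆ n, S.comap (iterateFrobenius R p n) ↔ ∃ n, x ^ p ^ n ∈ S := by
  rw [mem_iSup_of_directed (S.monotone_comap_iterateFrobenius p).directed_le]
  simp only [mem_comap, iterateFrobenius_def]

end Subring

namespace ValuationSubring

variable {L : Type*} [Field L]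

theorem pow_mem_iff (O : ValuationSubring L) {x : L} {n : ℕ} (hn : n ≠ 0) :
    x ^ n ∈ O ↔ x ∈ O := by
  rw [← O.valuation_le_one_iff, ← O.valuation_le_one_iff, map_pow]
  exact pow_le_one_iff hn

@[simp]
theorem comap_top {K : Type*} [Field K] (f : K →+* L) : (⊤ : ValuationSubring L).comap f = ⊤ :=
  rfl

variable (p : ℕ) [ExpChar L p]

theorem pow_expChar_pow_mem_iff (O : ValuationSubring L) (x : L) (n : ℕ) :
    x ^ p ^ n ∈ O ↔ x ∈ O :=
  O.pow_mem_iff (expChar_pow_pos L p n).ne'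

theorem subset_iff_of_forall_exists_pow_mem (O : ValuationSubring L) {k K : Set L}
    (hkK : k ⊆ K) (hK : ∀ x ∈ K, ∃ n : ℕ, x ^ p ^ n ∈ k) : K ⊆ O ↔ k ⊆ O := by
  refine ⟨hkK.trans, fun hkO x hx => ?_⟩
  obtain ⟨n, hn⟩ := hK x hx
  exact (O.pow_expChar_pow_mem_iff p x n).mp (hkO hn)

variable {F : Subfield L}

/-- `{x | ∃ n, x ^ p ^ n ∈ B}`, written as a directed union of subrings. -/
def extendOfPowMem (hF : ∀ x : L, ∃ n : ℕ, x ^ p ^ n ∈ F) (B : ValuationSubring F) :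
    ValuationSubring L where
  toSubring := ⨆ n, (B.toSubring.map F.subtype).comap (iterateFrobenius L p n)
  mem_or_inv_mem' x := by
    obtain ⟨n, hn⟩ := hF x
    rcases B.mem_or_inv_mem ⟨x ^ p ^ n, hn⟩ with h | h
    · exact .inl <| (Subring.mem_iSup_comap_iterateFrobenius p _).mpr ⟨n, _, h, rfl⟩
    · exact .inr <| (Subring.mem_iSup_comap_iterateFrobenius p _).mpr
        ⟨n, _, h, by simp [inv_pow]⟩

theorem mem_extendOfPowMem (hF : ∀ x : L, ∃ n : ℕ, x ^ p ^ n ∈ F) {B : ValuationSubring F}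
    {x : L} : x ∈ extendOfPowMem p hF B ↔ ∃ n, ∃ y ∈ B, (y : L) = x ^ p ^ n :=
  (Subring.mem_iSup_comap_iterateFrobenius p _).trans <| by simp only [Subring.mem_map]; rfl

theorem comap_extendOfPowMem (hF : ∀ x : L, ∃ n : ℕ, x ^ p ^ n ∈ F) (B : ValuationSubring F) :
    (extendOfPowMem p hF B).comap F.subtype = B := by
  ext z
  simp only [mem_comap, Subfield.subtype_apply, mem_extendOfPowMem p hF]
  constructor
  · rintro ⟨n, y, hy, hyz⟩
    rw [Subtype.ext (hyz.trans (SubmonoidClass.coe_pow z _).symm)] at hy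
    exact (B.pow_expChar_pow_mem_iff p z n).mp hy
  · exact fun hz => ⟨0, z ^ p ^ 0, pow_mem hz _, rfl⟩

theorem extendOfPowMem_comap (hF : ∀ x : L, ∃ n : ℕ, x ^ p ^ n ∈ F) (O : ValuationSubring L) :
    extendOfPowMem p hF (O.comap F.subtype) = O := by
  ext x
  simp only [mem_extendOfPowMem p hF, mem_comap, Subfield.subtype_apply]
  constructor
  · rintro ⟨n, y, hy, hyx⟩
    rw [hyx] at hy
    exact (O.pow_expChar_pow_mem_iff p x n).mp hy
  · intro hx
    obtain ⟨n, hn⟩ := hF x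
    exact ⟨n, ⟨_, hn⟩, (O.pow_expChar_pow_mem_iff p x n).mpr hx, rfl⟩

def comapSubtypeEquiv (hF : ∀ x : L, ∃ n : ℕ, x ^ p ^ n ∈ F) :
    ValuationSubring L ≃ ValuationSubring F where
  toFun O := O.comap F.subtype
  invFun := extendOfPowMem p hF
  left_inv := extendOfPowMem_comap p hF
  right_inv := comap_extendOfPowMem p hF

theorem comap_subtype_eq_top_iff (hF : ∀ x : L, ∃ n : ℕ, x ^ p ^ n ∈ F)
    {O : ValuationSubring L} : O.comap F.subtype = ⊤ ↔ O = ⊤ :=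
  (comapSubtypeEquiv p hF).injective.eq_iff' (comap_top _)

end ValuationSubring

open ValuationSubring in
theorem places_bijection_of_purelyInseparable_general
    {L : Type*} [Field L] (k₀ K L₀ : Subfield L)
    (hk₀K : k₀ ≤ K) (hk₀L₀ : k₀ ≤ L₀)
    (hKpi : ∀ x ∈ K, ∃ n : ℕ, x ^ (ringExpChar L) ^ n ∈ k₀)
    (hLpi : ∀ x : L, ∃ n : ℕ, x ^ (ringExpChar L) ^ n ∈ L₀) :
    Set.BijOn (fun O : ValuationSubring L => O.comap L₀.subtype)
      {O : ValuationSubring L | (K : Set L) ⊆ O ∧ O ≠ ⊤}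
      {B : ValuationSubring L₀ | (∀ c : L₀, (c : L) ∈ k₀ → c ∈ B) ∧ B ≠ ⊤} := by
  refine (comapSubtypeEquiv _ hLpi).bijOn fun O => and_congr ?_ ?_
  · rw [O.subset_iff_of_forall_exists_pow_mem _ hk₀K hKpi]
    exact ⟨fun h x hx => h ⟨x, hk₀L₀ hx⟩ hx, fun h c hc => h hc⟩
  · exact (comap_subtype_eq_top_iff _ hLpi).not

/-- **Theorem (Statement 19).** Let `L/L₀` be purely inseparable, with constant fields
`K/k₀` where `K` is purely inseparable over `k₀`, `K ∩ L₀ = k₀` and `L = K·L₀`. Then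
`B ↦ B ∩ L₀` is a bijection from the valuation rings of `L` over `K` (distinct from `L`)
onto the valuation rings of `L₀` over `k₀` (distinct from `L₀`). -/
theorem places_bijection_of_purelyInseparable
    {L : Type*} [Field L] (k₀ K L₀ : Subfield L)
    (hk₀K : k₀ ≤ K) (hk₀L₀ : k₀ ≤ L₀)
    (hKpi : ∀ x ∈ K, ∃ n : ℕ, x ^ (ringExpChar L) ^ n ∈ k₀)
    (hLpi : ∀ x : L, ∃ n : ℕ, x ^ (ringExpChar L) ^ n ∈ L₀)
    (hcap : K ⊓ L₀ = k₀) (hsup : K ⊔ L₀ = ⊤) :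
    Set.BijOn (fun O : ValuationSubring L => O.comap L₀.subtype)
      {O : ValuationSubring L | (K : Set L) ⊆ O ∧ O ≠ ⊤}
      {B : ValuationSubring L₀ | (∀ c : L₀, (c : L) ∈ k₀ → c ∈ B) ∧ B ≠ ⊤} :=
  places_bijection_of_purelyInseparable_general k₀ K L₀ hk₀K hk₀L₀ hKpi hLpi
end
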